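/- arXiv:1106.5736 — 2 statements merged into one kernel-verified Lean document; each statement's English description precedes it below -/
import Mathlib

section
/- Realizability of arbitrary interior cluster configurations: for every n ≥ 2 and every function A assigning to each interior index pair (x, y) (with 1 ≤ x ≤ ⌊n/2⌋−1 and 1 ≤ y ≤ ⌊n/2⌋−1) one of the six standard patterns, there exists g ∈ G(n) such that for every interior pair (x, y) the configuration of cluster (x, y) under the coloring c₀ ∘ g⁻¹ equals A(x, y). Consequently the number of distinct reachable colorings c₀ ∘ g⁻¹ with g ∈ G(n) is at least 6^((⌊n/2⌋−1)²). -/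
/-!
For an interior pair `(x, y)` the indices `x, n-1-x` are distinct, and so are `y, n-1-y`.
A commutator `⁅a, b⁆` of a product `a` of the column moves `σ x, σ (n-1-x)` with a product `b`
of the row moves `ρ y, ρ (n-1-y)` moves only stickers of `Cl(x, y)`: outside the two columns
`a` is trivial while `b` preserves that region, and symmetrically outside the two rows.
The identity and five such commutators realize the six standard patterns on `Cl(x, y)`.
Distinct interior clusters are disjoint, so these gadgets commute and their product realizes
any assignment of patterns at once. Reading off the interior configurations then embeds the
`6 ^ ((⌊n/2⌋ - 1) ^ 2)` assignments into the reachable colorings.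
-/

/-- Sticker positions of the `n × n × 1` Rubik's Cube. -/
abbrev RPos (n : ℕ) := Fin n × Fin n × Bool

/-- Underlying function of the row move `ρ i`. -/
def rowMoveFun (n : ℕ) (i : Fin n) : RPos n → RPos n :=
  fun p => if p.2.1 = i then (p.1.rev, p.2.1, !p.2.2) else p

theorem rowMoveFun_involutive (n : ℕ) (i : Fin n) :
    Function.Involutive (rowMoveFun n i) := by
  rintro ⟨x, y, b⟩
  by_cases h : y = i <;> simp [rowMoveFun, h]

/-- The row move `ρ i`. -/
def rowMove (n : ℕ) (i : Fin n) : Equiv.Perm (RPos n) :=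
  (rowMoveFun_involutive n i).toPerm _

/-- Underlying function of the column move `σ j`. -/
def colMoveFun (n : ℕ) (j : Fin n) : RPos n → RPos n :=
  fun p => if p.1 = j then (p.1, p.2.1.rev, !p.2.2) else p

theorem colMoveFun_involutive (n : ℕ) (j : Fin n) :
    Function.Involutive (colMoveFun n j) := by
  rintro ⟨x, y, b⟩
  by_cases h : x = j <;> simp [colMoveFun, h]

/-- The column move `σ j`. -/
def colMove (n : ℕ) (j : Fin n) : Equiv.Perm (RPos n) :=
  (colMoveFun_involutive n j).toPerm _

/-- The set `S(n)` of the `2n` legal moves. -/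
def RMoves (n : ℕ) : Set (Equiv.Perm (RPos n)) :=
  Set.range (rowMove n) ∪ Set.range (colMove n)

/-- The group `G(n)` generated by the legal moves. -/
def RGroup (n : ℕ) : Subgroup (Equiv.Perm (RPos n)) :=
  Subgroup.closure (RMoves n)

/-- The solved coloring `c₀`. -/
def solvedColoring (n : ℕ) : RPos n → Bool := fun p => p.2.2

/-- The cluster `Cl(x, y)`. -/
def cluster (n : ℕ) (x y : Fin n) : Set (RPos n) :=
  {p | (p.1 = x ∨ p.1 = x.rev) ∧ (p.2.1 = y ∨ p.2.1 = y.rev)}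

/-- The configuration of cluster `(x, y)` under a coloring `c`. -/
def clusterConfig (n : ℕ) (c : RPos n → Bool) (x y : Fin n) :
    Bool × Bool → Bool :=
  fun q => c (if q.1 then x.rev else x, if q.2 then y.rev else y, true)

/-- An interior index pair: `1 ≤ x ≤ ⌊n/2⌋ − 1` and `1 ≤ y ≤ ⌊n/2⌋ − 1`. -/
def Interior (n : ℕ) (x y : Fin n) : Prop :=
  1 ≤ (x : ℕ) ∧ (x : ℕ) ≤ n / 2 - 1 ∧ 1 ≤ (y : ℕ) ∧ (y : ℕ) ≤ n / 2 - 1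

/-- The six standard patterns: functions `Bool × Bool → Bool` whose value is
independent of the second argument or independent of the first argument. -/
def StandardPattern (f : Bool × Bool → Bool) : Prop :=
  (∀ ε δ δ', f (ε, δ) = f (ε, δ')) ∨ (∀ ε ε' δ, f (ε, δ) = f (ε', δ))

open MulAction Equiv Function Pointwise
open scoped commutatorElement

theorem commutatorElement_mem_fixingSubgroup {M α : Type*} [Group M] [MulAction M α]
    {s : Set α} {a b : M} (ha : a ∈ fixingSubgroup M s) (hb : b ∈ stabilizer M s) :
    ⁅a, b⁆ ∈ fixingSubgroup M s := by
  rw [mem_fixingSubgroup_iff] at ha ⊢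
  intro q hq
  have hbq : b⁻¹ • q ∈ s := by rwa [← mem_stabilizer_set.1 hb, smul_inv_smul]
  have ha' : a⁻¹ • b⁻¹ • q = b⁻¹ • q := by rw [inv_smul_eq_iff, ha _ hbq]
  rw [commutatorElement_def, mul_smul, mul_smul, mul_smul, ha', smul_inv_smul, ha q hq]

theorem commute_of_mem_fixingSubgroup_compl {α : Type*} {s t : Set α} (hst : Disjoint s t)
    {g h : Perm α} (hg : g ∈ fixingSubgroup (Perm α) sᶜ) (hh : h ∈ fixingSubgroup (Perm α) tᶜ) :
    Commute g h := by
  refine Perm.Disjoint.commute fun q => ?_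
  by_cases hq : q ∈ s
  · exact Or.inr ((mem_fixingSubgroup_iff _).1 hh q (hst.notMem_of_mem_left hq))
  · exact Or.inl ((mem_fixingSubgroup_iff _).1 hg q hq)

theorem Fin.ne_rev_of_lt_half {n : ℕ} {x : Fin n} (hx : (x : ℕ) < n / 2) : x ≠ x.rev := by
  rw [Ne, Fin.ext_iff, Fin.val_rev]; omega

theorem Fin.eq_of_eq_or_eq_rev {n : ℕ} {a b u : Fin n} (ha : (a : ℕ) < n / 2) (hb : (b : ℕ) < n / 2)
    (hua : u = a ∨ u = a.rev) (hub : u = b ∨ u = b.rev) : a = b := by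
  simp only [Fin.ext_iff, Fin.val_rev] at hua hub ⊢
  omega

instance : DecidablePred StandardPattern := fun f => by
  unfold StandardPattern; infer_instance

theorem StandardPattern.eq_or {f : Bool × Bool → Bool} (hf : StandardPattern f) :
    f = (fun _ => true) ∨ f = (fun _ => false) ∨ f = (fun q => q.1) ∨ f = (fun q => !q.1) ∨
      f = (fun q => q.2) ∨ f = (fun q => !q.2) := by
  revert f; decide

theorem card_standardPattern : Nat.card {f : Bool × Bool → Bool // StandardPattern f} = 6 := by
  rw [Nat.card_eq_fintype_card]; decide

theorem ncard_setOf_forall_standardPattern (ι : Type*) [Fintype ι] :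
    {F : ι → Bool × Bool → Bool | ∀ i, StandardPattern (F i)}.ncard = 6 ^ Fintype.card ι := by
  rw [← Nat.card_coe_set_eq, Set.coe_ofPred, Nat.card_congr Equiv.subtypePiEquivPi,
    Nat.card_pi, card_standardPattern, Finset.prod_const, Finset.card_univ]

section

variable {n : ℕ}

theorem rowMove_apply (i u v : Fin n) (b : Bool) :
    rowMove n i (u, v, b) = if v = i then (u.rev, v, !b) else (u, v, b) := rfl

theorem colMove_apply (j u v : Fin n) (b : Bool) :
    colMove n j (u, v, b) = if u = j then (u, v.rev, !b) else (u, v, b) := rfl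

@[simp] theorem rowMove_inv (i : Fin n) : (rowMove n i)⁻¹ = rowMove n i :=
  Function.Involutive.toPerm_symm _

@[simp] theorem colMove_inv (j : Fin n) : (colMove n j)⁻¹ = colMove n j :=
  Function.Involutive.toPerm_symm _

def colBand (n : ℕ) (x : Fin n) : Set (RPos n) := {p | p.1 = x ∨ p.1 = x.rev}

def rowBand (n : ℕ) (y : Fin n) : Set (RPos n) := {p | p.2.1 = y ∨ p.2.1 = y.rev}

theorem cluster_eq_colBand_inter_rowBand (x y : Fin n) :
    cluster n x y = colBand n x ∩ rowBand n y := rfl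

theorem colBand_rev (x : Fin n) : colBand n x.rev = colBand n x := by
  ext p; simp only [colBand, Set.mem_ofPred_eq, Fin.rev_rev, or_comm]

theorem rowBand_rev (y : Fin n) : rowBand n y.rev = rowBand n y := by
  ext p; simp only [rowBand, Set.mem_ofPred_eq, Fin.rev_rev, or_comm]

theorem colMove_mem_fixingSubgroup (x : Fin n) :
    colMove n x ∈ fixingSubgroup (Perm (RPos n)) (colBand n x)ᶜ := by
  rw [mem_fixingSubgroup_iff]
  rintro ⟨u, v, b⟩ hp
  simp_all [colBand, colMove_apply]

theorem rowMove_mem_fixingSubgroup (y : Fin n) :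
    rowMove n y ∈ fixingSubgroup (Perm (RPos n)) (rowBand n y)ᶜ := by
  rw [mem_fixingSubgroup_iff]
  rintro ⟨u, v, b⟩ hp
  simp_all [rowBand, rowMove_apply]

theorem colMove_mem_stabilizer (j y : Fin n) :
    colMove n j ∈ stabilizer (Perm (RPos n)) (rowBand n y) := by
  rw [mem_stabilizer_set]
  rintro ⟨u, v, b⟩
  by_cases hu : u = j <;> simp [rowBand, colMove_apply, hu, Fin.rev_eq_iff, or_comm]

theorem rowMove_mem_stabilizer (i x : Fin n) :
    rowMove n i ∈ stabilizer (Perm (RPos n)) (colBand n x) := by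
  rw [mem_stabilizer_set]
  rintro ⟨u, v, b⟩
  by_cases hv : v = i <;> simp [colBand, rowMove_apply, hv, Fin.rev_eq_iff, or_comm]

def colGroup (n : ℕ) (x : Fin n) : Subgroup (Perm (RPos n)) :=
  Subgroup.closure {colMove n x, colMove n x.rev}

def rowGroup (n : ℕ) (y : Fin n) : Subgroup (Perm (RPos n)) :=
  Subgroup.closure {rowMove n y, rowMove n y.rev}

def clusterGroup (n : ℕ) (x y : Fin n) : Subgroup (Perm (RPos n)) :=
  RGroup n ⊓ fixingSubgroup (Perm (RPos n)) (cluster n x y)ᶜ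

theorem colMove_mem_RGroup (j : Fin n) : colMove n j ∈ RGroup n :=
  Subgroup.subset_closure (Or.inr ⟨j, rfl⟩)

theorem rowMove_mem_RGroup (i : Fin n) : rowMove n i ∈ RGroup n :=
  Subgroup.subset_closure (Or.inl ⟨i, rfl⟩)

theorem colGroup_le (x y : Fin n) :
    colGroup n x ≤ RGroup n ⊓ fixingSubgroup (Perm (RPos n)) (colBand n x)ᶜ ⊓
      stabilizer (Perm (RPos n)) (rowBand n y) := by
  have key (j : Fin n) (hj : colBand n j = colBand n x) : colMove n j ∈
      RGroup n ⊓ fixingSubgroup (Perm (RPos n)) (colBand n x)ᶜ ⊓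
        stabilizer (Perm (RPos n)) (rowBand n y) :=
    ⟨⟨colMove_mem_RGroup j, hj ▸ colMove_mem_fixingSubgroup j⟩, colMove_mem_stabilizer j y⟩
  rw [colGroup, Subgroup.closure_le, Set.insert_subset_iff, Set.singleton_subset_iff]
  exact ⟨key x rfl, key x.rev (colBand_rev x)⟩

theorem rowGroup_le (x y : Fin n) :
    rowGroup n y ≤ RGroup n ⊓ fixingSubgroup (Perm (RPos n)) (rowBand n y)ᶜ ⊓
      stabilizer (Perm (RPos n)) (colBand n x) := by
  have key (i : Fin n) (hi : rowBand n i = rowBand n y) : rowMove n i ∈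
      RGroup n ⊓ fixingSubgroup (Perm (RPos n)) (rowBand n y)ᶜ ⊓
        stabilizer (Perm (RPos n)) (colBand n x) :=
    ⟨⟨rowMove_mem_RGroup i, hi ▸ rowMove_mem_fixingSubgroup i⟩, rowMove_mem_stabilizer i x⟩
  rw [rowGroup, Subgroup.closure_le, Set.insert_subset_iff, Set.singleton_subset_iff]
  exact ⟨key y rfl, key y.rev (rowBand_rev y)⟩

theorem colMove_mem_colGroup (x : Fin n) : colMove n x ∈ colGroup n x :=
  Subgroup.subset_closure (Set.mem_insert _ _)

theorem colMove_rev_mem_colGroup (x : Fin n) : colMove n x.rev ∈ colGroup n x :=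
  Subgroup.subset_closure (Set.mem_insert_of_mem _ rfl)

theorem rowMove_mem_rowGroup (y : Fin n) : rowMove n y ∈ rowGroup n y :=
  Subgroup.subset_closure (Set.mem_insert _ _)

theorem rowMove_rev_mem_rowGroup (y : Fin n) : rowMove n y.rev ∈ rowGroup n y :=
  Subgroup.subset_closure (Set.mem_insert_of_mem _ rfl)

theorem commutatorElement_mem_clusterGroup {x y : Fin n} {a b : Perm (RPos n)}
    (ha : a ∈ colGroup n x) (hb : b ∈ rowGroup n y) : ⁅a, b⁆ ∈ clusterGroup n x y := by
  obtain ⟨⟨haG, haFix⟩, haStab⟩ := by simpa only [Subgroup.mem_inf] using colGroup_le x y ha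
  obtain ⟨⟨hbG, hbFix⟩, hbStab⟩ := by simpa only [Subgroup.mem_inf] using rowGroup_le x y hb
  refine Subgroup.mem_inf.2 ⟨?_, ?_⟩
  · rw [commutatorElement_def]
    exact mul_mem (mul_mem (mul_mem haG hbG) (inv_mem haG)) (inv_mem hbG)
  · rw [cluster_eq_colBand_inter_rowBand, Set.compl_inter, fixingSubgroup_union]
    refine Subgroup.mem_inf.2
      ⟨commutatorElement_mem_fixingSubgroup haFix (by rwa [stabilizer_compl]), ?_⟩
    rw [← commutatorElement_inv]
    exact inv_mem (commutatorElement_mem_fixingSubgroup hbFix (by rwa [stabilizer_compl]))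

theorem clusterConfig_commutators {x y : Fin n} (hx : x ≠ x.rev) (hy : y ≠ y.rev) :
    clusterConfig n (solvedColoring n ∘ ⇑⁅colMove n x * colMove n x.rev, rowMove n y⁆⁻¹) x y =
        (fun _ => false) ∧
      clusterConfig n (solvedColoring n ∘ ⇑⁅colMove n x, rowMove n y⁆⁻¹) x y = (fun q => q.1) ∧
      clusterConfig n (solvedColoring n ∘ ⇑⁅colMove n x.rev, rowMove n y⁆⁻¹) x y =
        (fun q => !q.1) ∧
      clusterConfig n (solvedColoring n ∘ ⇑⁅rowMove n y, colMove n x⁆⁻¹) x y = (fun q => q.2) ∧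
      clusterConfig n (solvedColoring n ∘ ⇑⁅rowMove n y.rev, colMove n x⁆⁻¹) x y =
        (fun q => !q.2) := by
  refine ⟨?_, ?_, ?_, ?_, ?_⟩ <;> ext ⟨_ | _, _ | _⟩ <;>
    simp [clusterConfig, solvedColoring, commutatorElement_def, rowMove_apply, colMove_apply,
      hx, hx.symm, hy, hy.symm]

theorem exists_mem_clusterGroup_clusterConfig_eq {x y : Fin n} (hx : x ≠ x.rev)
    (hy : y ≠ y.rev) {f : Bool × Bool → Bool} (hf : StandardPattern f) :
    ∃ g ∈ clusterGroup n x y, clusterConfig n (solvedColoring n ∘ ⇑g⁻¹) x y = f := by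
  have hσ := colMove_mem_colGroup x
  have hσ' := colMove_rev_mem_colGroup x
  have hρ := rowMove_mem_rowGroup y
  have hρ' := rowMove_rev_mem_rowGroup y
  have swap {a b} (ha : a ∈ colGroup n x) (hb : b ∈ rowGroup n y) :
      ⁅b, a⁆ ∈ clusterGroup n x y := by
    rw [← commutatorElement_inv]; exact inv_mem (commutatorElement_mem_clusterGroup ha hb)
  obtain ⟨h₀, h₁, h₂, h₃, h₄⟩ := clusterConfig_commutators hx hy
  rcases hf.eq_or with rfl | rfl | rfl | rfl | rfl | rfl
  · exact ⟨1, one_mem _, rfl⟩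
  · exact ⟨_, commutatorElement_mem_clusterGroup (mul_mem hσ hσ') hρ, h₀⟩
  · exact ⟨_, commutatorElement_mem_clusterGroup hσ hρ, h₁⟩
  · exact ⟨_, commutatorElement_mem_clusterGroup hσ' hρ, h₂⟩
  · exact ⟨_, swap hσ hρ, h₃⟩
  · exact ⟨_, swap hσ hρ', h₄⟩

theorem Interior.lt_half {x y : Fin n} (h : Interior n x y) :
    (x : ℕ) < n / 2 ∧ (y : ℕ) < n / 2 := by
  obtain ⟨hx₁, hx₂, hy₁, hy₂⟩ := h; omega

theorem disjoint_cluster {a b x y : Fin n} (hab : Interior n a b) (hxy : Interior n x y)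
    (hne : (a, b) ≠ (x, y)) : Disjoint (cluster n a b) (cluster n x y) :=
  Set.disjoint_left.2 fun _ hp hp' => hne <| Prod.ext
    (Fin.eq_of_eq_or_eq_rev hab.lt_half.1 hxy.lt_half.1 hp.1 hp'.1)
    (Fin.eq_of_eq_or_eq_rev hab.lt_half.2 hxy.lt_half.2 hp.2 hp'.2)

theorem clusterConfig_mul_inv_of_mem_fixingSubgroup {x y : Fin n} {h : Perm (RPos n)}
    (hh : h ∈ fixingSubgroup (Perm (RPos n)) (cluster n x y)) (c : RPos n → Bool)
    (g : Perm (RPos n)) :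
    clusterConfig n (c ∘ ⇑(h * g)⁻¹) x y = clusterConfig n (c ∘ ⇑g⁻¹) x y := by
  ext ⟨ε, δ⟩
  have hmem : ((if ε then x.rev else x, if δ then y.rev else y, true) : RPos n) ∈
      cluster n x y := ⟨by cases ε <;> simp, by cases δ <;> simp⟩
  simp only [clusterConfig, Function.comp_apply, mul_inv_rev, Perm.mul_apply]
  congr 2
  exact (mem_fixingSubgroup_iff _).1 (inv_mem hh) _ hmem

theorem exists_clusterConfig_eq (A : Fin n → Fin n → Bool × Bool → Bool)
    (hA : ∀ x y, Interior n x y → StandardPattern (A x y)) :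
    ∃ g ∈ RGroup n, ∀ x y, Interior n x y →
      clusterConfig n (solvedColoring n ∘ ⇑g⁻¹) x y = A x y := by
  classical
  choose! G hG hGA using fun x y (h : Interior n x y) =>
    exists_mem_clusterGroup_clusterConfig_eq (Fin.ne_rev_of_lt_half h.lt_half.1)
      (Fin.ne_rev_of_lt_half h.lt_half.2) (hA x y h)
  set I := Finset.univ.filter fun p : Fin n × Fin n => Interior n p.1 p.2
  have hI {p} : p ∈ I ↔ Interior n p.1 p.2 := by simp [I]
  have hfix {p q} (hp : p ∈ I) (hq : q ∈ I) (hpq : p ≠ q) :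
      G p.1 p.2 ∈ fixingSubgroup (Perm (RPos n)) (cluster n q.1 q.2) :=
    fixingSubgroup_antitone (Perm (RPos n)) (RPos n)
      (disjoint_cluster (hI.1 hp) (hI.1 hq) hpq).subset_compl_left
      (Subgroup.mem_inf.1 (hG _ _ (hI.1 hp))).2
  have comm : (I : Set (Fin n × Fin n)).Pairwise (Commute on fun p => G p.1 p.2) :=
    fun p hp q hq hpq => commute_of_mem_fixingSubgroup_compl
      (disjoint_cluster (hI.1 hp) (hI.1 hq) hpq) (Subgroup.mem_inf.1 (hG _ _ (hI.1 hp))).2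
      (Subgroup.mem_inf.1 (hG _ _ (hI.1 hq))).2
  refine ⟨I.noncommProd _ comm, Subgroup.noncommProd_mem _ _ fun p hp =>
    (Subgroup.mem_inf.1 (hG _ _ (hI.1 hp))).1, fun x y hxy => ?_⟩
  have hxyI : (x, y) ∈ I := hI.2 hxy
  rw [← I.noncommProd_erase_mul hxyI _ comm, ← hGA x y hxy]
  exact clusterConfig_mul_inv_of_mem_fixingSubgroup (Subgroup.noncommProd_mem _ _ fun p hp =>
    hfix (Finset.mem_of_mem_erase hp) hxyI (Finset.ne_of_mem_erase hp)) _ _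

end

theorem six_pow_le_ncard_reachable (n : ℕ) :
    6 ^ ((n / 2 - 1) ^ 2) ≤
      Set.ncard {c : RPos n → Bool | ∃ g ∈ RGroup n, c = solvedColoring n ∘ ⇑g⁻¹} := by
  classical
  set k := n / 2 - 1
  set S := {c : RPos n → Bool | ∃ g ∈ RGroup n, c = solvedColoring n ∘ ⇑g⁻¹}
  let e : Fin k → Fin n := fun i => ⟨i + 1, by omega⟩
  have he_inj : Injective e := fun i j h => Fin.ext (by simpa [e] using h)
  have he {i j : Fin k} : Interior n (e i) (e j) := by
    refine ⟨?_, ?_, ?_, ?_⟩ <;> simp only [e] <;> omega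
  let Φ (c : RPos n → Bool) (p : Fin k × Fin k) := clusterConfig n c (e p.1) (e p.2)
  have hsub : {F : Fin k × Fin k → Bool × Bool → Bool | ∀ p, StandardPattern (F p)} ⊆ Φ '' S := by
    intro F hF
    let A (x y : Fin n) := extend (Prod.map e e) F (fun _ _ => true) (x, y)
    have hA (x y : Fin n) : StandardPattern (A x y) := by
      simp only [A, extend_def]
      split_ifs
      exacts [hF _, Or.inl fun _ _ _ => rfl]
    obtain ⟨g, hg, hgA⟩ := exists_clusterConfig_eq A fun x y _ => hA x y
    exact ⟨_, ⟨g, hg, rfl⟩, funext fun p =>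
      (hgA _ _ he).trans ((he_inj.prodMap he_inj).extend_apply F _ p)⟩
  calc 6 ^ (k ^ 2)
      = {F : Fin k × Fin k → Bool × Bool → Bool | ∀ p, StandardPattern (F p)}.ncard := by
        rw [ncard_setOf_forall_standardPattern, Fintype.card_prod, Fintype.card_fin, sq]
    _ ≤ (Φ '' S).ncard := Set.ncard_le_ncard hsub (Set.toFinite _)
    _ ≤ S.ncard := Set.ncard_image_le (Set.toFinite _)

theorem nxnx1_cluster_realizability_general (n : ℕ) :
    (∀ A : Fin n → Fin n → Bool × Bool → Bool,
      (∀ x y, Interior n x y → StandardPattern (A x y)) →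
      ∃ g ∈ RGroup n, ∀ x y, Interior n x y →
        clusterConfig n (solvedColoring n ∘ ⇑g⁻¹) x y = A x y) ∧
    6 ^ ((n / 2 - 1) ^ 2) ≤
      Set.ncard {c : RPos n → Bool | ∃ g ∈ RGroup n, c = solvedColoring n ∘ ⇑g⁻¹} :=
  ⟨exists_clusterConfig_eq, six_pow_le_ncard_reachable n⟩

/-- **Realizability of arbitrary interior cluster configurations.**
For every `n ≥ 2`, any assignment of one of the six standard patterns to each
interior cluster is realized by some `g ∈ G(n)`; consequently there are at
least `6^((⌊n/2⌋−1)²)` distinct reachable colorings. -/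
theorem nxnx1_cluster_realizability (n : ℕ) (hn : 2 ≤ n) :
    (∀ A : Fin n → Fin n → Bool × Bool → Bool,
      (∀ x y, Interior n x y → StandardPattern (A x y)) →
      ∃ g ∈ RGroup n, ∀ x y, Interior n x y →
        clusterConfig n (solvedColoring n ∘ ⇑g⁻¹) x y = A x y) ∧
    6 ^ ((n / 2 - 1) ^ 2) ≤
      Set.ncard {c : RPos n → Bool | ∃ g ∈ RGroup n, c = solvedColoring n ∘ ⇑g⁻¹} :=
  nxnx1_cluster_realizability_general n
end

section
/- Constant-length local solution of a single cluster: for every n ≥ 2, every g ∈ G(n), and every interior index pair (x, y), there exist k ≤ 6 and moves m₁, …, m_k, each belonging to {ρ_y, ρ_{n−1−y}, σ_x, σ_{n−1−x}}, such that the product h = m_k ⋯ m₁ fixes every position of P(n) outside Cl(x, y), and the coloring c₀ ∘ (h g)⁻¹ agrees with c₀ on Cl(x, y) (the cluster is solved without affecting any cubie outside it). -/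
/-!
For an interior pair, `x ≠ n-1-x` and `y ≠ n-1-y`. Every move turns cubies over, flipping both of
their stickers, so the two stickers of a cubie always have opposite colors and the coloring of a
cluster is determined by the top colors of its four cubies. Each of the four moves through the
cluster acts on these four bits, while the other moves fix them, and the six standard patterns
(top color depending on one coordinate only) form an invariant set containing the solved state. A
finite check solves each standard pattern by a commutator word of length at most six. Such a word
uses every move an even number of times, and outside the cluster every position `p` is moved by at
most one of the four moves `m`, the others fixing `p` and `m p`; so the word fixes `p`.
-/

open Equiv

lemma List.prod_map_apply_of_swap {ι α : Type*} [BEq ι] [LawfulBEq ι] (M : ι → Equiv.Perm α)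
    {a : ι} {p q : α} (hp : M a p = q) (hq : M a q = p) (hfix : ∀ b ≠ a, M b p = p ∧ M b q = q)
    (w : List ι) : (w.map M).prod p = if Even (w.count a) then p else q := by
  induction w with
  | nil => simp
  | cons b w ih =>
    rw [List.map_cons, List.prod_cons, Equiv.Perm.mul_apply, ih]
    by_cases hb : b = a
    · subst hb
      rw [List.count_cons_self]
      by_cases he : Even (w.count b) <;> simp [he, Nat.even_add_one, hp, hq]
    · rw [List.count_cons_of_ne hb]
      split_ifs
      exacts [(hfix b hb).1, (hfix b hb).2]

section
variable {n : ℕ}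

@[simp] lemma rowMove_apply_s5 (i : Fin n) (p : RPos n) :
    rowMove n i p = if p.2.1 = i then (p.1.rev, p.2.1, !p.2.2) else p := rfl

@[simp] lemma colMove_apply_s5 (j : Fin n) (p : RPos n) :
    colMove n j p = if p.1 = j then (p.1, p.2.1.rev, !p.2.2) else p := rfl

lemma inv_eq_self_of_mem_RMoves {m : Perm (RPos n)} (hm : m ∈ RMoves n) : m⁻¹ = m := by
  rcases hm with ⟨i, rfl⟩ | ⟨j, rfl⟩ <;> rfl

lemma comp_inv_of_mem_RGroup {α : Type*} {P : (RPos n → α) → Prop}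
    (hP : ∀ c, P c → ∀ m ∈ RMoves n, P (c ∘ m)) {c : RPos n → α} (hc : P c)
    {g : Perm (RPos n)} (hg : g ∈ RGroup n) : P (c ∘ ⇑g⁻¹) := by
  induction hg using Subgroup.closure_induction_left with
  | one => simpa using hc
  | mul_left m hm g _ ih =>
    rw [mul_inv_rev, inv_eq_self_of_mem_RMoves hm, Perm.coe_mul, ← Function.comp_assoc]
    exact hP _ ih m hm
  | inv_mul_cancel m hm g _ ih =>
    rw [inv_eq_self_of_mem_RMoves hm, mul_inv_rev, inv_eq_self_of_mem_RMoves hm, Perm.coe_mul,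
      ← Function.comp_assoc]
    exact hP _ ih m hm

def OppositeFaces (c : RPos n → Bool) : Prop :=
  ∀ a b, c (a, b, false) = !c (a, b, true)

lemma OppositeFaces.comp {c : RPos n → Bool} (hc : OppositeFaces c)
    {m : Perm (RPos n)} (hm : m ∈ RMoves n) : OppositeFaces (c ∘ m) := by
  intro a b
  rcases hm with ⟨i, rfl⟩ | ⟨j, rfl⟩
  · by_cases h : b = i <;> simp [h, hc _ _]
  · by_cases h : a = j <;> simp [h, hc _ _]

lemma Interior.rev_ne {x y : Fin n} (h : Interior n x y) : x.rev ≠ x ∧ y.rev ≠ y := by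
  obtain ⟨hx₁, hx₂, hy₁, hy₂⟩ := h
  refine ⟨fun h => ?_, fun h => ?_⟩ <;> have := congrArg Fin.val h <;> rw [Fin.val_rev] at this <;>
    omega

def clusterMove (x y : Fin n) : Bool × Bool → Perm (RPos n)
  | (false, δ) => rowMove n (if δ then y.rev else y)
  | (true, ε) => colMove n (if ε then x.rev else x)

def clusterStep : Bool × Bool → (Bool × Bool → Bool) → Bool × Bool → Bool
  | (false, δ), t, q => if q.2 = δ then !t (!q.1, δ) else t q
  | (true, ε), t, q => if q.1 = ε then !t (ε, !q.2) else t q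

variable {x y : Fin n}

lemma clusterMove_mem_RMoves (a : Bool × Bool) : clusterMove x y a ∈ RMoves n := by
  rcases a with ⟨_ | _, _⟩
  exacts [Or.inl ⟨_, rfl⟩, Or.inr ⟨_, rfl⟩]

lemma clusterMove_apply_clusterMove (a : Bool × Bool) (p : RPos n) :
    clusterMove x y a (clusterMove x y a p) = p := by
  rw [← Perm.mul_apply]
  nth_rewrite 1 [← inv_eq_self_of_mem_RMoves (clusterMove_mem_RMoves a)]
  rw [inv_mul_cancel, Perm.one_apply]

lemma clusterConfig_comp_clusterMove (hx : x.rev ≠ x) (hy : y.rev ≠ y)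
    {c : RPos n → Bool} (hc : OppositeFaces c) (a : Bool × Bool) :
    clusterConfig n (c ∘ clusterMove x y a) x y = clusterStep a (clusterConfig n c x y) := by
  funext ⟨ε, δ⟩
  rcases a with ⟨_ | _, α⟩ <;> cases ε <;> cases δ <;> cases α <;>
    simp [clusterConfig, clusterMove, clusterStep, hx, hy, hx.symm, hy.symm, hc _ _]

lemma clusterConfig_comp_of_fixes {c : RPos n → Bool} {m : Perm (RPos n)}
    (hm : ∀ p ∈ cluster n x y, m p = p) :
    clusterConfig n (c ∘ m) x y = clusterConfig n c x y := by
  funext ⟨ε, δ⟩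
  simp only [clusterConfig, Function.comp_apply]
  rw [hm]
  exact ⟨by cases ε <;> simp, by cases δ <;> simp⟩

lemma mem_RMoves_cases {m : Perm (RPos n)} (hm : m ∈ RMoves n) :
    (∃ a, clusterMove x y a = m) ∨ ∀ p ∈ cluster n x y, m p = p := by
  rcases hm with ⟨i, rfl⟩ | ⟨j, rfl⟩
  · by_cases hi : i = y ∨ i = y.rev
    · left
      rcases hi with rfl | rfl
      exacts [⟨(false, false), rfl⟩, ⟨(false, true), rfl⟩]
    · right
      rintro p ⟨-, hp⟩
      have : p.2.1 ≠ i := by rintro rfl; exact hi hp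
      simp [this]
  · by_cases hj : j = x ∨ j = x.rev
    · left
      rcases hj with rfl | rfl
      exacts [⟨(true, false), rfl⟩, ⟨(true, true), rfl⟩]
    · right
      rintro p ⟨hp, -⟩
      have : p.1 ≠ j := by rintro rfl; exact hj hp
      simp [this]

instance inst_s5 : DecidablePred StandardPattern := fun t => by
  unfold StandardPattern; infer_instance

lemma standardPattern_clusterStep :
    ∀ a t, StandardPattern t → StandardPattern (clusterStep a t) := by
  decide

lemma exists_solving_word (t : Bool × Bool → Bool) (ht : StandardPattern t) :
    ∃ w : List (Bool × Bool), w.length ≤ 6 ∧ (∀ a, Even (w.count a)) ∧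
      w.foldr clusterStep t = fun _ => true := by
  -- Each nonempty candidate is a commutator of two products of involutions.
  have : ∀ t, StandardPattern t → ∃ w ∈ [[],
      [(true, false), (false, true), (false, false), (true, false), (false, true), (false, false)],
      [(true, false), (false, false), (true, false), (false, false)],
      [(false, false), (true, false), (false, false), (true, false)],
      [(false, false), (true, true), (false, false), (true, true)],
      [(true, false), (false, true), (true, false), (false, true)]],
      (w.length ≤ 6 ∧ ∀ a, Even (w.count a)) ∧ w.foldr clusterStep t = fun _ => true := by
    decide
  obtain ⟨w, -, ⟨hlen, heven⟩, hw⟩ := this t ht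
  exact ⟨w, hlen, heven, hw⟩

lemma standardPattern_clusterConfig_comp (hx : x.rev ≠ x) (hy : y.rev ≠ y)
    {c : RPos n → Bool} (hc : OppositeFaces c) (hstd : StandardPattern (clusterConfig n c x y))
    {m : Perm (RPos n)} (hm : m ∈ RMoves n) : StandardPattern (clusterConfig n (c ∘ m) x y) := by
  rcases mem_RMoves_cases (x := x) (y := y) hm with ⟨a, rfl⟩ | hfix
  · rw [clusterConfig_comp_clusterMove hx hy hc]
    exact standardPattern_clusterStep a _ hstd
  · rwa [clusterConfig_comp_of_fixes hfix]

lemma oppositeFaces_and_standardPattern_of_mem_RGroup (hx : x.rev ≠ x) (hy : y.rev ≠ y)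
    {g : Perm (RPos n)} (hg : g ∈ RGroup n) :
    OppositeFaces (solvedColoring n ∘ ⇑g⁻¹) ∧
      StandardPattern (clusterConfig n (solvedColoring n ∘ ⇑g⁻¹) x y) := by
  refine comp_inv_of_mem_RGroup (P := fun c => OppositeFaces c ∧ _)
    (fun c hc m hm => ⟨hc.1.comp hm, standardPattern_clusterConfig_comp hx hy hc.1 hc.2 hm⟩)
    ⟨fun _ _ => rfl, Or.inl fun _ _ _ => rfl⟩ hg

lemma clusterConfig_comp_prod_inv (hx : x.rev ≠ x) (hy : y.rev ≠ y)
    {c : RPos n → Bool} (hc : OppositeFaces c) (w : List (Bool × Bool)) :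
    OppositeFaces (c ∘ ⇑(w.map (clusterMove x y)).prod⁻¹) ∧
      clusterConfig n (c ∘ ⇑(w.map (clusterMove x y)).prod⁻¹) x y =
        w.foldr clusterStep (clusterConfig n c x y) := by
  induction w with
  | nil => exact ⟨hc, rfl⟩
  | cons a w ih =>
    have hinv := inv_eq_self_of_mem_RMoves (clusterMove_mem_RMoves (x := x) (y := y) a)
    rw [List.map_cons, List.prod_cons, mul_inv_rev, hinv, Perm.coe_mul, ← Function.comp_assoc,
      List.foldr_cons, clusterConfig_comp_clusterMove hx hy ih.1, ih.2]
    exact ⟨ih.1.comp (clusterMove_mem_RMoves a), rfl⟩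

lemma eq_solvedColoring_of_clusterConfig_eq_true {c : RPos n → Bool} (hc : OppositeFaces c)
    (h : clusterConfig n c x y = fun _ => true) {p : RPos n} (hp : p ∈ cluster n x y) :
    c p = solvedColoring n p := by
  obtain ⟨u, v, s⟩ := p
  have htop : c (u, v, true) = true := by
    obtain ⟨hu | hu, hv | hv⟩ := hp <;> subst hu hv
    exacts [congrFun h (false, false), congrFun h (false, true), congrFun h (true, false),
      congrFun h (true, true)]
  cases s
  · simp [solvedColoring, hc u v, htop]
  · exact htop

lemma exists_clusterMove_swap (hx : x.rev ≠ x) (hy : y.rev ≠ y) {p : RPos n}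
    (hp : p ∉ cluster n x y) : ∃ a, ∀ b ≠ a,
      clusterMove x y b p = p ∧ clusterMove x y b (clusterMove x y a p) = clusterMove x y a p := by
  obtain ⟨u, v, s⟩ := p
  simp only [cluster, Set.mem_ofPred_eq, not_and] at hp
  by_cases hv : v = y ∨ v = y.rev
  · have hu := mt hp (not_not.2 hv)
    push Not at hu
    rcases hv with rfl | rfl
    · refine ⟨(false, false), ?_⟩
      rintro ⟨_ | _, _ | _⟩ hb <;> simp_all [clusterMove, Fin.rev_eq_iff]
    · refine ⟨(false, true), ?_⟩
      rintro ⟨_ | _, _ | _⟩ hb <;> simp_all [clusterMove, Fin.rev_eq_iff]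
  · by_cases hu : u = x ∨ u = x.rev
    · push Not at hv
      rcases hu with rfl | rfl
      · refine ⟨(true, false), ?_⟩
        rintro ⟨_ | _, _ | _⟩ hb <;> simp_all [clusterMove, Fin.rev_eq_iff]
      · refine ⟨(true, true), ?_⟩
        rintro ⟨_ | _, _ | _⟩ hb <;> simp_all [clusterMove, Fin.rev_eq_iff]
    · push Not at hu hv
      refine ⟨(false, false), ?_⟩
      rintro ⟨_ | _, _ | _⟩ hb <;> simp_all [clusterMove, Fin.rev_eq_iff]

lemma prod_clusterMove_apply_of_notMem (hx : x.rev ≠ x) (hy : y.rev ≠ y)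
    {w : List (Bool × Bool)} (hw : ∀ a, Even (w.count a)) {p : RPos n}
    (hp : p ∉ cluster n x y) : (w.map (clusterMove x y)).prod p = p := by
  obtain ⟨a, ha⟩ := exists_clusterMove_swap hx hy hp
  rw [List.prod_map_apply_of_swap _ rfl (clusterMove_apply_clusterMove a p) ha]
  exact if_pos (hw a)

end

theorem nxnx1_local_cluster_solution_general (n : ℕ)
    (g : Equiv.Perm (RPos n)) (hg : g ∈ RGroup n)
    (x y : Fin n) (hxy : Interior n x y) :
    ∃ L : List (Equiv.Perm (RPos n)),
      L.length ≤ 6 ∧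
      (∀ m ∈ L, m ∈ ({rowMove n y, rowMove n y.rev, colMove n x, colMove n x.rev} :
        Set (Equiv.Perm (RPos n)))) ∧
      (∀ p : RPos n, p ∉ cluster n x y → L.prod p = p) ∧
      (∀ p ∈ cluster n x y,
        (solvedColoring n ∘ ⇑(L.prod * g)⁻¹) p = solvedColoring n p) := by
  obtain ⟨hx, hy⟩ := hxy.rev_ne
  obtain ⟨hc, hstd⟩ := oppositeFaces_and_standardPattern_of_mem_RGroup hx hy hg
  obtain ⟨w, hlen, heven, hsolve⟩ := exists_solving_word _ hstd
  obtain ⟨hc', hconfig⟩ := clusterConfig_comp_prod_inv hx hy hc w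
  refine ⟨w.map (clusterMove x y), by simpa using hlen, ?_,
    fun p hp => prod_clusterMove_apply_of_notMem hx hy heven hp, fun p hp => ?_⟩
  · simp only [List.mem_map]
    rintro _ ⟨⟨_ | _, _ | _⟩, -, rfl⟩ <;> simp [clusterMove]
  · rw [mul_inv_rev, Perm.coe_mul, ← Function.comp_assoc]
    exact eq_solvedColoring_of_clusterConfig_eq_true hc' (hconfig.trans hsolve) hp

/-- **Constant-length local solution of a single cluster.**
For every `n ≥ 2`, `g ∈ G(n)`, and interior pair `(x, y)`, there is a sequence
of at most `6` moves, each among `ρ_y, ρ_{n−1−y}, σ_x, σ_{n−1−x}`, whose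
product `h` fixes every position outside `Cl(x, y)` and for which the coloring
`c₀ ∘ (h g)⁻¹` agrees with `c₀` on `Cl(x, y)`. -/
theorem nxnx1_local_cluster_solution (n : ℕ) (hn : 2 ≤ n)
    (g : Equiv.Perm (RPos n)) (hg : g ∈ RGroup n)
    (x y : Fin n) (hxy : Interior n x y) :
    ∃ L : List (Equiv.Perm (RPos n)),
      L.length ≤ 6 ∧
      (∀ m ∈ L, m ∈ ({rowMove n y, rowMove n y.rev, colMove n x, colMove n x.rev} :
        Set (Equiv.Perm (RPos n)))) ∧
      (∀ p : RPos n, p ∉ cluster n x y → L.prod p = p) ∧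
      (∀ p ∈ cluster n x y,
        (solvedColoring n ∘ ⇑(L.prod * g)⁻¹) p = solvedColoring n p) :=
  nxnx1_local_cluster_solution_general n g hg x y hxy
end
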